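/- Let k be a field, 𝒞 a formation (Hopf-encoded), and A a commutative Hopf algebra over k. Let A_𝒞 denote the union of all finitely generated Hopf subalgebras of A that belong to 𝒞. Then: (1) A_𝒞 is a Hopf subalgebra of A; (2) A_𝒞 is pro-𝒞, i.e., every finitely generated Hopf subalgebra of A_𝒞 belongs to 𝒞; and (3) every Hopf subalgebra B of A that is pro-𝒞 is contained in A_𝒞. -/

import Mathlib

open TensorProduct

section Prelim

variable (k : Type) [Field k]

/-- Bundled commutative Hopf algebra over `k`. -/
structure HopfAlg where
  carrier : Type
  [instCommRing : CommRing carrier]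
  [instHopf : HopfAlgebra k carrier]

attribute [instance] HopfAlg.instCommRing HopfAlg.instHopf

variable {k}

/-- `B` is a Hopf subalgebra of `A`: the comultiplication maps `B` into the image of
`B ⊗ B` in `A ⊗ A` and the antipode maps `B` into `B`. -/
def IsHopfSubalgebra {A : Type} [CommRing A] [HopfAlgebra k A]
    (B : Subalgebra k A) : Prop :=
  (∀ b ∈ B, Coalgebra.comul (R := k) b ∈
      LinearMap.range (TensorProduct.map B.val.toLinearMap B.val.toLinearMap)) ∧
  (∀ b ∈ B, HopfAlgebra.antipode (R := k) b ∈ B)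

/-- A Hopf algebra homomorphism: a `k`-algebra homomorphism commuting with the
comultiplications. -/
def IsHopfHom {A B : Type} [CommRing A] [HopfAlgebra k A]
    [CommRing B] [HopfAlgebra k B] (f : A →ₐ[k] B) : Prop :=
  ∀ a : A, Coalgebra.comul (R := k) (f a) =
    TensorProduct.map f.toLinearMap f.toLinearMap (Coalgebra.comul (R := k) a)

/-- A Hopf ideal of `A`: the counit vanishes on `I`, the comultiplication maps `I` into
`I ⊗ A + A ⊗ I`, and the antipode maps `I` into `I`. -/
def IsHopfIdeal (k : Type) [Field k] {A : Type} [CommRing A] [HopfAlgebra k A]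
    (I : Ideal A) : Prop :=
  (∀ a ∈ I, Coalgebra.counit (R := k) a = 0) ∧
  (∀ a ∈ I, Coalgebra.comul (R := k) a ∈
      LinearMap.range (TensorProduct.map (Submodule.restrictScalars k I).subtype
        (LinearMap.id : A →ₗ[k] A)) ⊔
      LinearMap.range (TensorProduct.map (LinearMap.id : A →ₗ[k] A)
        (Submodule.restrictScalars k I).subtype)) ∧
  (∀ a ∈ I, HopfAlgebra.antipode (R := k) a ∈ I)

/-- A subalgebra `S` of `A` "belongs to the class `𝒞`" if some member of `𝒞` maps onto `S`
by an injective Hopf algebra homomorphism into `A`. -/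
def MemFormation (𝒞 : Set (HopfAlg k)) {A : Type} [CommRing A]
    [HopfAlgebra k A] (S : Subalgebra k A) : Prop :=
  ∃ D ∈ 𝒞, ∃ f : D.carrier →ₐ[k] A, IsHopfHom f ∧ Function.Injective f ∧ f.range = S

/-- A formation of (coordinate rings of) algebraic groups, Hopf-encoded. -/
structure IsFormation (𝒞 : Set (HopfAlg k)) : Prop where
  fg : ∀ B ∈ 𝒞, (⊤ : Subalgebra k B.carrier).FG
  nontrivial : ∃ B ∈ 𝒞, ¬ Function.Surjective (algebraMap k B.carrier)
  iso_closed : ∀ B ∈ 𝒞, ∀ B' : HopfAlg k,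
    (∃ e : B.carrier ≃ₐ[k] B'.carrier, IsHopfHom e.toAlgHom) → B' ∈ 𝒞
  sub_closed : ∀ B ∈ 𝒞, ∀ S : Subalgebra k B.carrier,
    IsHopfSubalgebra S → MemFormation 𝒞 S
  sup_closed : ∀ (A : HopfAlg k) (B₁ B₂ : Subalgebra k A.carrier),
    IsHopfSubalgebra B₁ → IsHopfSubalgebra B₂ →
    MemFormation 𝒞 B₁ → MemFormation 𝒞 B₂ → MemFormation 𝒞 (B₁ ⊔ B₂)

/-- `A` is pro-`𝒞`: every finitely generated Hopf subalgebra of `A` belongs to `𝒞`. -/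
def IsProC (𝒞 : Set (HopfAlg k)) (A : Type) [CommRing A] [HopfAlgebra k A] : Prop :=
  ∀ S : Subalgebra k A, S.FG → IsHopfSubalgebra S → MemFormation 𝒞 S

/-- The family `ι` of `k`-algebra homomorphisms `A → R` converges to `1`. -/
def ConvergesToOne {A : Type} [CommRing A] [HopfAlgebra k A]
    {R : Type} [CommRing R] [Algebra k R] {X : Type} (ι : X → (A →ₐ[k] R)) : Prop :=
  ∀ S : Subalgebra k A, S.FG → IsHopfSubalgebra S →
    {x : X | ∃ a ∈ S, ι x a ≠ algebraMap k R (Coalgebra.counit (R := k) a)}.Finite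

/-- The only Hopf ideal of `A` contained in the intersection of the kernels of the `ι x`
is the zero ideal. -/
def HopfGenerates {A : Type} [CommRing A] [HopfAlgebra k A]
    {R : Type} [CommRing R] [Algebra k R] {X : Type} (ι : X → (A →ₐ[k] R)) : Prop :=
  ∀ I : Ideal A, IsHopfIdeal k I → (∀ x : X, I ≤ RingHom.ker (ι x).toRingHom) → I = ⊥

/-- `(A, ι)` is the free pro-`𝒞` group on `X` over `R`. -/
structure IsFreeProC (𝒞 : Set (HopfAlg k)) (R : Type) [CommRing R] [Algebra k R]
    (X : Type) (A : Type) [CommRing A] [HopfAlgebra k A]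
    (ι : X → (A →ₐ[k] R)) : Prop where
  proC : IsProC 𝒞 A
  conv : ConvergesToOne ι
  gen : HopfGenerates ι
  univ : ∀ (A' : HopfAlg k) (φ : X → (A'.carrier →ₐ[k] R)),
    ConvergesToOne φ → HopfGenerates φ →
    ∃! u : A'.carrier →ₐ[k] A, IsHopfHom u ∧ ∀ x : X, φ x = (ι x).comp u

/-- `A` is a saturated pro-`𝒞` Hopf algebra: every nontrivial pro-`𝒞` embedding problem
with the appropriate size restrictions has a solution. -/
def IsSaturated (𝒞 : Set (HopfAlg k)) (A : Type) [CommRing A] [HopfAlgebra k A] : Prop :=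
  ∀ (B C : HopfAlg k) (f : C.carrier →ₐ[k] B.carrier) (g : C.carrier →ₐ[k] A),
    IsHopfHom f → IsHopfHom g → Function.Injective f → Function.Injective g →
    ¬ Function.Surjective f → IsProC 𝒞 B.carrier →
    ((⊤ : Subalgebra k C.carrier).FG ∨ Module.rank k C.carrier < Module.rank k A) →
    ((⊤ : Subalgebra k B.carrier).FG ∨ Module.rank k B.carrier ≤ Module.rank k A) →
    ∃ h : B.carrier →ₐ[k] A, IsHopfHom h ∧ Function.Injective h ∧ h.comp f = g

end Prelim

/-! The finitely generated Hopf subalgebras of `A` belonging to `𝒞` contain `⊥` and are closed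
under `⊔` (the formation axiom), so they form a directed family whose union `A_𝒞` is a Hopf
subalgebra. A finitely generated subalgebra of `A_𝒞` lies in one member of the family, and
belongs to `𝒞` because `𝒞` is closed under Hopf subalgebras.

Maximality rests on local finiteness: an element `b` of a Hopf subalgebra `B` lies in the
finite-dimensional subcoalgebra of `B` spanned by the elements `(φ ⊗ id ⊗ ψ) (Δ² b)`, and
the algebra generated by this subcoalgebra and its image under the antipode is a finitely
generated Hopf subalgebra of `B` containing `b`. -/

open Coalgebra HopfAlgebra WithConv TensorProduct

namespace HopfAlgebra

section Semiring

variable {k A : Type*} [CommSemiring k] [Semiring A] [HopfAlgebra k A]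

theorem comp_antipode_mul_self {B : Type*} [Semiring B] [Algebra k B] (f : A →ₐ[k] B) :
    toConv (f.toLinearMap ∘ₗ antipode k) * toConv f.toLinearMap = 1 := by
  ext a
  have := congr($(LinearMap.algHom_comp_convMul_distrib f (toConv (antipode k)) (toConv .id)) a)
  simpa using this.symm

theorem self_mul_comp_antipode {B : Type*} [Semiring B] [Algebra k B] (f : A →ₐ[k] B) :
    toConv f.toLinearMap * toConv (f.toLinearMap ∘ₗ antipode k) = 1 := by
  ext a
  have := congr($(LinearMap.algHom_comp_convMul_distrib f (toConv .id) (toConv (antipode k))) a)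
  simpa using this.symm

/-- In the convolution monoid of linear maps `A → A ⊗ A`, `Δ = iₗ * iᵣ`, so its inverse
`Δ ∘ S` is `(iᵣ ∘ S) * (iₗ ∘ S)`. -/
theorem comul_antipode (a : A) :
    comul (R := k) (antipode k a) =
      TensorProduct.comm k A A (map (antipode k) (antipode k) (comul a)) := by
  let iL := (Algebra.TensorProduct.includeLeft : A →ₐ[k] A ⊗[k] A)
  let iR := (Algebra.TensorProduct.includeRight : A →ₐ[k] A ⊗[k] A)
  let G := (TensorProduct.comm k A A).toLinearMap ∘ₗ map (antipode k) (antipode k) ∘ₗ comul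
  have hΔ : toConv (comul (R := k) (A := A)) = toConv iL.toLinearMap * toConv iR.toLinearMap := by
    ext a
    rw [(ℛ k a).convMul_apply, ← (ℛ k a).eq]
    simp [iL, iR, Algebra.TensorProduct.tmul_mul_tmul]
  have hG : toConv G =
      toConv (iR.toLinearMap ∘ₗ antipode k) * toConv (iL.toLinearMap ∘ₗ antipode k) := by
    ext a
    rw [(ℛ k a).convMul_apply]
    conv_lhs => rw [LinearMap.comp_apply, LinearMap.comp_apply, ← (ℛ k a).eq]
    simp [iL, iR, Algebra.TensorProduct.tmul_mul_tmul]
  have hright : toConv comul * toConv G = 1 := by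
    rw [hΔ, hG, mul_assoc, ← mul_assoc (toConv iR.toLinearMap), self_mul_comp_antipode, one_mul,
      self_mul_comp_antipode]
  exact congr($(left_inv_eq_right_inv (comp_antipode_mul_self (Bialgebra.comulAlgHom k A))
    hright) a)

end Semiring

variable {k A : Type*} [CommRing k] [CommRing A] [HopfAlgebra k A]

/-- Among algebra maps, `S` is the convolution inverse of `id`, and the inverse of `S` is
`S ∘ S`. -/
theorem antipode_antipode (a : A) : antipode k (antipode k a) = a := by
  have h : (toConv (antipodeAlgHom k A))⁻¹ = toConv (AlgHom.id k A) := by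
    rw [inv_eq_iff_eq_inv]
    rfl
  exact congr($(congrArg ofConv h) a)

end HopfAlgebra

section TensorDual

variable {k M N : Type*} [Field k] [AddCommGroup M] [Module k M] [AddCommGroup N] [Module k N]

theorem mem_range_rTensor_of_forall_dual (V : Submodule k M) {t : M ⊗[k] N}
    (h : ∀ χ : Module.Dual k N, TensorProduct.rid k M (χ.lTensor M t) ∈ V) :
    t ∈ LinearMap.range (V.subtype.rTensor N) := by
  classical
  let b := Module.Free.chooseBasis k N
  rw [← (equivFinsuppOfBasisRight b).symm_apply_apply t, equivFinsuppOfBasisRight_symm_apply]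
  refine Submodule.sum_mem _ fun j _ ↦ ⟨⟨_, h (b.coord j)⟩ ⊗ₜ b j, ?_⟩
  simp [equivFinsuppOfBasisRight_apply]

theorem mem_range_lTensor_of_forall_dual (V : Submodule k N) {t : M ⊗[k] N}
    (h : ∀ χ : Module.Dual k M, TensorProduct.lid k N (χ.rTensor N t) ∈ V) :
    t ∈ LinearMap.range (V.subtype.lTensor M) := by
  classical
  let b := Module.Free.chooseBasis k M
  rw [← (equivFinsuppOfBasisLeft b).symm_apply_apply t, equivFinsuppOfBasisLeft_symm_apply]
  refine Submodule.sum_mem _ fun j _ ↦ ⟨b j ⊗ₜ ⟨_, h (b.coord j)⟩, ?_⟩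
  simp [equivFinsuppOfBasisLeft_apply]

theorem mem_range_mapIncl_of_forall_dual (V : Submodule k M) (W : Submodule k N) {t : M ⊗[k] N}
    (hV : ∀ χ : Module.Dual k N, TensorProduct.rid k M (χ.lTensor M t) ∈ V)
    (hW : ∀ χ : Module.Dual k M, TensorProduct.lid k N (χ.rTensor N t) ∈ W) :
    t ∈ LinearMap.range (mapIncl V W) := by
  obtain ⟨u, rfl⟩ := mem_range_rTensor_of_forall_dual V hV
  obtain ⟨g, hg⟩ := V.subtype.exists_leftInverse_of_injective V.ker_subtype
  obtain ⟨w, rfl⟩ := mem_range_lTensor_of_forall_dual W (t := u) fun χ ↦ by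
    simpa [← LinearMap.comp_apply, ← LinearMap.rTensor_comp, LinearMap.comp_assoc, hg]
      using hW (χ ∘ₗ g)
  exact ⟨w, by rw [← LinearMap.comp_apply, LinearMap.rTensor_comp_lTensor]⟩

end TensorDual

section Subcoalgebra

variable {k C : Type*} [CommSemiring k] [AddCommMonoid C] [Module k C] [Coalgebra k C]

def IsSubcoalgebra (V : Submodule k C) : Prop :=
  ∀ v ∈ V, comul (R := k) v ∈ LinearMap.range (mapIncl V V)

theorem IsSubcoalgebra.sup {V W : Submodule k C} (hV : IsSubcoalgebra V)
    (hW : IsSubcoalgebra W) : IsSubcoalgebra (V ⊔ W) := by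
  intro x hx
  obtain ⟨v, hv, w, hw, rfl⟩ := Submodule.mem_sup.1 hx
  rw [map_add]
  exact add_mem (range_mapIncl_mono le_sup_left le_sup_left (hV v hv))
    (range_mapIncl_mono le_sup_right le_sup_right (hW w hw))

theorem IsSubcoalgebra.exists_repr_mem {V : Submodule k C} (hV : IsSubcoalgebra V) {x : C}
    (hx : x ∈ V) : ∃ r : Repr k x (V × V), ∀ i, r.left i ∈ V ∧ r.right i ∈ V := by
  obtain ⟨u, hu⟩ := hV x hx
  obtain ⟨s, rfl⟩ := TensorProduct.exists_finset u
  exact ⟨⟨s, fun p ↦ p.1, fun p ↦ p.2, by simpa [map_sum] using hu⟩,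
    fun p ↦ ⟨p.1.2, p.2.2⟩⟩

noncomputable def comulContractLeft (φ : Module.Dual k C) : C →ₗ[k] C :=
  TensorProduct.lid k C ∘ₗ φ.rTensor C ∘ₗ comul

noncomputable def comulContractRight (φ : Module.Dual k C) : C →ₗ[k] C :=
  TensorProduct.rid k C ∘ₗ φ.lTensor C ∘ₗ comul

theorem comulContractLeft_apply (φ : Module.Dual k C) {x : C} {ι : Type*} (r : Repr k x ι) :
    comulContractLeft φ x = ∑ i ∈ r.index, φ (r.left i) • r.right i := by
  simp [comulContractLeft, ← r.eq, map_sum]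

theorem comulContractRight_apply (φ : Module.Dual k C) {x : C} {ι : Type*} (r : Repr k x ι) :
    comulContractRight φ x = ∑ i ∈ r.index, φ (r.right i) • r.left i := by
  simp [comulContractRight, ← r.eq, map_sum]

theorem comulContractLeft_comulContractRight (φ ψ : Module.Dual k C) (x : C) :
    comulContractLeft φ (comulContractRight ψ x) =
      comulContractRight ψ (comulContractLeft φ x) := by
  let r := ℛ k x
  let T := (TensorProduct.lid k C).toLinearMap ∘ₗ φ.rTensor C ∘ₗ
    ((TensorProduct.rid k C).toLinearMap ∘ₗ ψ.lTensor C).lTensor C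
  have h := congr(T $(sum_tmul_tmul_eq r (ℛ k <| r.left ·) (ℛ k <| r.right ·)))
  simp [T, map_sum] at h
  rw [comulContractRight_apply _ r, comulContractLeft_apply _ r, map_sum, map_sum]
  simp only [LinearMap.map_smul_of_tower]
  simp only [comulContractLeft_apply _ (ℛ k _), comulContractRight_apply _ (ℛ k _)]
  simpa [Finset.smul_sum, smul_smul, mul_comm] using h

theorem comulContractRight_comulContractRight (χ ψ : Module.Dual k C) (x : C) :
    comulContractRight χ (comulContractRight ψ x) =
      comulContractRight (toConv χ * toConv ψ).ofConv x := by
  let r := ℛ k x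
  let T := (TensorProduct.rid k C).toLinearMap ∘ₗ χ.lTensor C ∘ₗ
    ((TensorProduct.rid k C).toLinearMap ∘ₗ ψ.lTensor C).lTensor C
  have h := congr(T $(sum_tmul_tmul_eq r (ℛ k <| r.left ·) (ℛ k <| r.right ·)))
  simp [T, map_sum] at h
  rw [comulContractRight_apply _ r, comulContractRight_apply _ r, map_sum]
  simp only [LinearMap.map_smul_of_tower]
  simp only [comulContractRight_apply _ (ℛ k _), (ℛ k _).convMul_apply]
  simpa [Finset.smul_sum, Finset.sum_smul, smul_smul, mul_comm] using h

theorem comulContractLeft_comulContractLeft (χ φ : Module.Dual k C) (x : C) :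
    comulContractLeft χ (comulContractLeft φ x) =
      comulContractLeft (toConv φ * toConv χ).ofConv x := by
  let r := ℛ k x
  let T := (TensorProduct.lid k C).toLinearMap ∘ₗ φ.rTensor C ∘ₗ
    ((TensorProduct.lid k C).toLinearMap ∘ₗ χ.rTensor C).lTensor C
  have h := congr(T $(sum_tmul_tmul_eq r (ℛ k <| r.left ·) (ℛ k <| r.right ·)))
  simp [T, map_sum] at h
  rw [comulContractLeft_apply _ r, comulContractLeft_apply _ r, map_sum]
  simp only [LinearMap.map_smul_of_tower]
  simp only [comulContractLeft_apply _ (ℛ k _), (ℛ k _).convMul_apply]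
  simpa [Finset.smul_sum, Finset.sum_smul, smul_smul, mul_comm] using h.symm

theorem IsSubcoalgebra.comulContractLeft_mem {V : Submodule k C} (hV : IsSubcoalgebra V)
    (φ : Module.Dual k C) {x : C} (hx : x ∈ V) : comulContractLeft φ x ∈ V := by
  obtain ⟨r, hr⟩ := hV.exists_repr_mem hx
  rw [comulContractLeft_apply _ r]
  exact Submodule.sum_mem _ fun i _ ↦ Submodule.smul_mem _ _ (hr i).2

theorem IsSubcoalgebra.comulContractRight_mem {V : Submodule k C} (hV : IsSubcoalgebra V)
    (φ : Module.Dual k C) {x : C} (hx : x ∈ V) : comulContractRight φ x ∈ V := by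
  obtain ⟨r, hr⟩ := hV.exists_repr_mem hx
  rw [comulContractRight_apply _ r]
  exact Submodule.sum_mem _ fun i _ ↦ Submodule.smul_mem _ _ (hr i).1

variable (k) in
noncomputable def coefficientSpace (x : C) : Submodule k C :=
  Submodule.span k (Set.range fun p : Module.Dual k C × Module.Dual k C ↦
    comulContractLeft p.1 (comulContractRight p.2 x))

theorem mem_coefficientSpace_self (x : C) : x ∈ coefficientSpace k x := by
  refine Submodule.subset_span ⟨(counit, counit), ?_⟩
  simp [comulContractLeft, comulContractRight, lTensor_counit_comul, rTensor_counit_comul]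

theorem IsSubcoalgebra.coefficientSpace_le {V : Submodule k C} (hV : IsSubcoalgebra V) {x : C}
    (hx : x ∈ V) : coefficientSpace k x ≤ V :=
  Submodule.span_le.2 <| Set.range_subset_iff.2 fun _ ↦
    hV.comulContractLeft_mem _ (hV.comulContractRight_mem _ hx)

theorem comulContractLeft_mem_coefficientSpace (χ : Module.Dual k C) {x v : C}
    (hv : v ∈ coefficientSpace k x) : comulContractLeft χ v ∈ coefficientSpace k x := by
  refine (Submodule.span_le (p := (coefficientSpace k x).comap (comulContractLeft χ))).2
    (Set.range_subset_iff.2 fun p ↦ ?_) hv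
  exact Submodule.subset_span ⟨((toConv p.1 * toConv χ).ofConv, p.2),
    (comulContractLeft_comulContractLeft _ _ _).symm⟩

theorem comulContractRight_mem_coefficientSpace (χ : Module.Dual k C) {x v : C}
    (hv : v ∈ coefficientSpace k x) : comulContractRight χ v ∈ coefficientSpace k x := by
  refine (Submodule.span_le (p := (coefficientSpace k x).comap (comulContractRight χ))).2
    (Set.range_subset_iff.2 fun p ↦ ?_) hv
  refine Submodule.subset_span ⟨(p.1, (toConv χ * toConv p.2).ofConv), ?_⟩
  simp only [← comulContractRight_comulContractRight, comulContractLeft_comulContractRight]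

end Subcoalgebra

section CoefficientSpace

variable {k C : Type*} [Field k] [AddCommGroup C] [Module k C] [Coalgebra k C]

theorem coefficientSpace_fg (x : C) : (coefficientSpace k x).FG := by
  let r := ℛ k x
  let s : Set C := ⋃ i ∈ r.index, (ℛ k (r.left i)).right '' (ℛ k (r.left i)).index
  have hs : s.Finite := r.index.finite_toSet.biUnion fun i _ ↦ (Finset.finite_toSet _).image _
  refine (Submodule.fg_span hs).of_le (Submodule.span_le.2 ?_)
  rintro _ ⟨⟨φ, ψ⟩, rfl⟩
  dsimp only
  rw [comulContractRight_apply _ r, map_sum]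
  refine Submodule.sum_mem _ fun i hi ↦ ?_
  rw [LinearMap.map_smul_of_tower, comulContractLeft_apply _ (ℛ k _)]
  refine Submodule.smul_mem _ _ (Submodule.sum_mem _ fun j hj ↦ Submodule.smul_mem _ _ ?_)
  exact Submodule.subset_span (Set.mem_biUnion hi ⟨j, hj, rfl⟩)

theorem isSubcoalgebra_coefficientSpace (x : C) : IsSubcoalgebra (coefficientSpace k x) :=
  fun _ hv ↦ mem_range_mapIncl_of_forall_dual _ _
    (fun χ ↦ comulContractRight_mem_coefficientSpace χ hv)
    (fun χ ↦ comulContractLeft_mem_coefficientSpace χ hv)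

end CoefficientSpace

section HopfSubalgebra

variable {k : Type} [Field k] {A : Type} [CommRing A] [HopfAlgebra k A]

theorem range_map_val_mono {S T : Subalgebra k A} (h : S ≤ T) :
    LinearMap.range (map S.val.toLinearMap S.val.toLinearMap) ≤
      LinearMap.range (map T.val.toLinearMap T.val.toLinearMap) := by
  rw [← Subalgebra.val_comp_inclusion h, AlgHom.comp_toLinearMap, map_comp]
  exact LinearMap.range_comp_le_range _ _

theorem isHopfSubalgebra_of_le_comap {B : Subalgebra k A}
    (hΔ : B ≤ (Algebra.TensorProduct.map B.val B.val).range.comap (Bialgebra.comulAlgHom k A))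
    (hS : B ≤ B.comap (antipodeAlgHom k A)) : IsHopfSubalgebra B :=
  ⟨fun _ hb ↦ hΔ hb, fun _ hb ↦ hS hb⟩

theorem isHopfSubalgebra_sSup {𝒮 : Set (Subalgebra k A)}
    (h𝒮 : ∀ S ∈ 𝒮, IsHopfSubalgebra S) : IsHopfSubalgebra (sSup 𝒮) := by
  refine isHopfSubalgebra_of_le_comap (sSup_le fun S hS b hb ↦ ?_) (sSup_le fun S hS b hb ↦ ?_)
  · exact range_map_val_mono (le_sSup hS) ((h𝒮 S hS).1 b hb)
  · exact le_sSup hS ((h𝒮 S hS).2 b hb)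

theorem isHopfSubalgebra_bot : IsHopfSubalgebra (⊥ : Subalgebra k A) := by
  simpa using isHopfSubalgebra_sSup (𝒮 := (∅ : Set (Subalgebra k A))) (by simp)

theorem IsHopfSubalgebra.sup {S T : Subalgebra k A} (hS : IsHopfSubalgebra S)
    (hT : IsHopfSubalgebra T) : IsHopfSubalgebra (S ⊔ T) := by
  simpa using isHopfSubalgebra_sSup (𝒮 := {S, T}) (by simp [hS, hT])

theorem isHopfSubalgebra_adjoin_of_isSubcoalgebra {W : Submodule k A} (hW : IsSubcoalgebra W)
    (hS : ∀ w ∈ W, antipode k w ∈ W) : IsHopfSubalgebra (Algebra.adjoin k (W : Set A)) := by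
  have hle : LinearMap.range W.subtype ≤
      LinearMap.range (Algebra.adjoin k (W : Set A)).val.toLinearMap := by
    rintro _ ⟨w, rfl⟩
    exact ⟨⟨w, Algebra.subset_adjoin w.2⟩, rfl⟩
  exact isHopfSubalgebra_of_le_comap
    (Algebra.adjoin_le fun w hw ↦ range_map_mono hle hle (hW w hw))
    (Algebra.adjoin_le fun w hw ↦ Algebra.subset_adjoin (hS w hw))

theorem IsSubcoalgebra.map_antipode {V : Submodule k A} (hV : IsSubcoalgebra V) :
    IsSubcoalgebra (V.map (antipode k)) := by
  rintro _ ⟨v, hv, rfl⟩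
  obtain ⟨u, hu⟩ := hV v hv
  have hS : LinearMap.range (antipode k ∘ₗ V.subtype) ≤
      LinearMap.range (V.map (antipode k)).subtype := by
    rw [LinearMap.range_comp, Submodule.range_subtype, Submodule.range_subtype]
  obtain ⟨w, hw⟩ := range_map_mono hS hS ⟨u, rfl⟩
  refine ⟨TensorProduct.comm k _ _ w, ?_⟩
  rw [HopfAlgebra.comul_antipode, ← hu, map_comm, hw, map_map]

theorem exists_fg_isHopfSubalgebra_mem {B : Subalgebra k A} (hB : IsHopfSubalgebra B) {b : A}
    (hb : b ∈ B) : ∃ S ≤ B, S.FG ∧ IsHopfSubalgebra S ∧ b ∈ S := by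
  let V := coefficientSpace k b
  let W := V ⊔ V.map (antipode k)
  have hVB : V ≤ Subalgebra.toSubmodule B :=
    IsSubcoalgebra.coefficientSpace_le (V := Subalgebra.toSubmodule B) hB.1 hb
  have hWB : W ≤ Subalgebra.toSubmodule B :=
    sup_le hVB (Submodule.map_le_iff_le_comap.2 fun v hv ↦ hB.2 v (hVB hv))
  have hWS : ∀ w ∈ W, antipode k w ∈ W := by
    intro w hw
    obtain ⟨v, hv, _, ⟨v', hv', rfl⟩, rfl⟩ := Submodule.mem_sup.1 hw
    rw [map_add, HopfAlgebra.antipode_antipode]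
    exact add_mem (Submodule.mem_sup_right ⟨v, hv, rfl⟩) (Submodule.mem_sup_left hv')
  have hW : IsSubcoalgebra W :=
    (isSubcoalgebra_coefficientSpace b).sup (isSubcoalgebra_coefficientSpace b).map_antipode
  obtain ⟨t, ht⟩ := (coefficientSpace_fg b).sup ((coefficientSpace_fg b).map (antipode k))
  refine ⟨Algebra.adjoin k (W : Set A), Algebra.adjoin_le hWB, ⟨t, ?_⟩,
    isHopfSubalgebra_adjoin_of_isSubcoalgebra hW hWS,
    Algebra.subset_adjoin (Submodule.mem_sup_left (mem_coefficientSpace_self b))⟩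
  rw [← Algebra.adjoin_span, ht]

end HopfSubalgebra

section HopfHom

variable {k : Type} [Field k] {A D : Type} [CommRing A] [HopfAlgebra k A]
  [CommRing D] [HopfAlgebra k D] {f : D →ₐ[k] A}

noncomputable def IsHopfHom.mapRepr (hf : IsHopfHom f) {d : D} {ι : Type*} (r : Repr k d ι) :
    Repr k (f d) ι where
  index := r.index
  left := f ∘ r.left
  right := f ∘ r.right
  eq := by simp [hf d, ← r.eq, map_sum]

theorem IsHopfHom.counit_apply (hf : IsHopfHom f) (hinj : Function.Injective f) (d : D) :
    counit (R := k) (f d) = counit (R := k) d := by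
  let r := ℛ k d
  have hright : ∑ i ∈ r.index, counit (R := k) (f (r.right i)) • r.left i = d := by
    apply hinj
    simpa [IsHopfHom.mapRepr, map_sum, -sum_tmul_counit_eq] using
      congr(TensorProduct.rid k A $(sum_tmul_counit_eq (hf.mapRepr r)))
  calc counit (R := k) (f d)
      = counit (R := k) (f (∑ i ∈ r.index, counit (R := k) (r.left i) • r.right i)) := by
        rw [sum_counit_smul r]
    _ = counit (R := k) (∑ i ∈ r.index, counit (R := k) (f (r.right i)) • r.left i) := by
        simp [map_sum, mul_comm]
    _ = counit (R := k) d := by rw [hright]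

theorem IsHopfHom.antipode_apply (hf : IsHopfHom f) (hinj : Function.Injective f) (d : D) :
    antipode k (f d) = f (antipode k d) := by
  have hright : toConv f.toLinearMap * toConv (antipode k ∘ₗ f.toLinearMap) = 1 := by
    ext x
    rw [(ℛ k x).convMul_apply]
    simpa [IsHopfHom.mapRepr, hf.counit_apply hinj] using
      sum_mul_antipode_eq_algebraMap_counit (hf.mapRepr (ℛ k x))
  exact congr($(left_inv_eq_right_inv (HopfAlgebra.comp_antipode_mul_self f) hright) d).symm

theorem IsHopfHom.comp {B : Type} [CommRing B] [HopfAlgebra k B] {g : B →ₐ[k] D}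
    (hf : IsHopfHom f) (hg : IsHopfHom g) : IsHopfHom (f.comp g) := by
  intro b
  rw [AlgHom.comp_apply, hf, hg, AlgHom.comp_toLinearMap, map_comp, LinearMap.comp_apply]

theorem isHopfHom_ofId_comp_counitAlgHom :
    IsHopfHom ((Algebra.ofId k A).comp (Bialgebra.counitAlgHom k D)) := by
  intro d
  simp only [AlgHom.comp_apply, Bialgebra.counitAlgHom_apply, Algebra.ofId_apply]
  conv_lhs => rw [← sum_counit_smul (ℛ k d)]
  rw [← (ℛ k d).eq]
  simp [map_sum, Algebra.algebraMap_eq_smul_one, Algebra.TensorProduct.one_def, smul_tmul',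
    TensorProduct.tmul_smul, smul_smul, mul_comm]

theorem IsHopfSubalgebra.comap (hf : IsHopfHom f) (hinj : Function.Injective f)
    {S : Subalgebra k A} (hS : IsHopfSubalgebra S) (hSf : S ≤ f.range) :
    IsHopfSubalgebra (S.comap f) := by
  refine ⟨fun d hd ↦ ?_, fun d hd ↦ ?_⟩
  · have hrange : LinearMap.range S.val.toLinearMap ≤
        LinearMap.range (f.comp (S.comap f).val).toLinearMap := by
      rintro _ ⟨⟨x, hx⟩, rfl⟩
      obtain ⟨d', rfl⟩ := hSf hx
      exact ⟨⟨d', hx⟩, rfl⟩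
    obtain ⟨u, hu⟩ := range_map_mono hrange hrange (hS.1 _ hd)
    refine ⟨u, map_injective_of_flat_flat f.toLinearMap f.toLinearMap hinj hinj ?_⟩
    rw [← hf, map_map]
    exact hu
  · change f (antipode k d) ∈ S
    rw [← hf.antipode_apply hinj]
    exact hS.2 _ hd

end HopfHom

section Formation

variable {k : Type} [Field k] {A : Type} [CommRing A] [HopfAlgebra k A] {𝒞 : Set (HopfAlg k)}

theorem MemFormation.of_le (h𝒞 : IsFormation 𝒞) {S T : Subalgebra k A}
    (hT : MemFormation 𝒞 T) (hS : IsHopfSubalgebra S) (hST : S ≤ T) : MemFormation 𝒞 S := by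
  obtain ⟨D, hD, f, hf, hinj, rfl⟩ := hT
  obtain ⟨E, hE, g, hg, hginj, hgrange⟩ := h𝒞.sub_closed D hD _ (hS.comap hf hinj hST)
  refine ⟨E, hE, f.comp g, hf.comp hg, hinj.comp hginj, ?_⟩
  rw [AlgHom.range_comp, hgrange, Subalgebra.map_comap_eq_self hST]

/-- `⊥` of a member `B` of `𝒞` belongs to `𝒞`, and `b ↦ ε(b) • 1` carries it onto
`⊥ ⊆ A`. -/
theorem memFormation_bot (h𝒞 : IsFormation 𝒞) : MemFormation 𝒞 (⊥ : Subalgebra k A) := by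
  obtain ⟨B, hB, -⟩ := h𝒞.nontrivial
  obtain ⟨D, hD, f, hf, hinj, hrange⟩ := h𝒞.sub_closed B hB ⊥ isHopfSubalgebra_bot
  let u := (Algebra.ofId k A).comp (Bialgebra.counitAlgHom k B.carrier)
  have hfd : ∀ d, algebraMap k B.carrier (counit (R := k) (f d)) = f d := by
    intro d
    obtain ⟨c, hc⟩ := Algebra.mem_bot.1 (hrange ▸ f.mem_range_self d)
    rw [← hc, Bialgebra.counit_algebraMap]
  refine ⟨D, hD, u.comp f, isHopfHom_ofId_comp_counitAlgHom.comp hf, fun d d' h ↦ hinj ?_, ?_⟩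
  · rw [← hfd d, ← hfd d']
    exact congrArg _ (Bialgebra.algebraMap_injective A h)
  · refine le_antisymm ?_ bot_le
    rintro _ ⟨d, rfl⟩
    exact Algebra.mem_bot.2 ⟨_, rfl⟩

end Formation

section Directed

variable {R A : Type*} [CommSemiring R] [Semiring A] [Algebra R A]

theorem Subalgebra.coe_sSup_of_directedOn {𝒮 : Set (Subalgebra R A)} (hne : 𝒮.Nonempty)
    (hdir : DirectedOn (· ≤ ·) 𝒮) :
    ((sSup 𝒮 : Subalgebra R A) : Set A) = ⋃ S ∈ 𝒮, (S : Set A) := by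
  have := hne.coe_sort
  rw [sSup_eq_iSup', coe_iSup_of_directed hdir.directed_val, Set.biUnion_eq_iUnion]

theorem Subalgebra.FG.exists_le_of_le_sSup {𝒮 : Set (Subalgebra R A)} (hne : 𝒮.Nonempty)
    (hdir : DirectedOn (· ≤ ·) 𝒮) {S : Subalgebra R A} (hS : S.FG) (hle : S ≤ sSup 𝒮) :
    ∃ T ∈ 𝒮, S ≤ T := by
  obtain ⟨t, rfl⟩ := hS
  have ht : (t : Set A) ⊆ ⋃ T ∈ 𝒮, (T : Set A) := by
    rw [← coe_sSup_of_directedOn hne hdir]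
    exact (Algebra.subset_adjoin (R := R)).trans hle
  obtain ⟨T, hT, htT⟩ := hdir.exists_mem_subset_of_finset_subset_biUnion hne ht
  exact ⟨T, hT, Algebra.adjoin_le htT⟩

end Directed

theorem stmt2 (k : Type) [Field k] (𝒞 : Set (HopfAlg k)) (h𝒞 : IsFormation 𝒞)
    (A : Type) [CommRing A] [HopfAlgebra k A] :
    ∃ AC : Subalgebra k A,
      (AC : Set A) = {a : A | ∃ S : Subalgebra k A,
          S.FG ∧ IsHopfSubalgebra S ∧ MemFormation 𝒞 S ∧ a ∈ S} ∧
      IsHopfSubalgebra AC ∧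
      (∀ S : Subalgebra k A, S ≤ AC → S.FG → IsHopfSubalgebra S → MemFormation 𝒞 S) ∧
      (∀ B : Subalgebra k A, IsHopfSubalgebra B →
        (∀ S : Subalgebra k A, S ≤ B → S.FG → IsHopfSubalgebra S → MemFormation 𝒞 S) →
        B ≤ AC) := by
  let 𝒮 : Set (Subalgebra k A) := {S | S.FG ∧ IsHopfSubalgebra S ∧ MemFormation 𝒞 S}
  have hne : 𝒮.Nonempty :=
    ⟨⊥, Subalgebra.fg_bot, isHopfSubalgebra_bot, memFormation_bot h𝒞⟩
  have hdir : DirectedOn (· ≤ ·) 𝒮 := fun S ⟨hSfg, hS, hS𝒞⟩ T ⟨hTfg, hT, hT𝒞⟩ =>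
    ⟨S ⊔ T, ⟨hSfg.sup hTfg, hS.sup hT, h𝒞.sup_closed ⟨A⟩ S T hS hT hS𝒞 hT𝒞⟩,
      le_sup_left, le_sup_right⟩
  refine ⟨sSup 𝒮, ?_, isHopfSubalgebra_sSup fun S hS ↦ hS.2.1, ?_, ?_⟩
  · rw [Subalgebra.coe_sSup_of_directedOn hne hdir]
    ext a
    simp [𝒮, and_assoc]
  · intro S hle hS hShopf
    obtain ⟨T, hT, hST⟩ := hS.exists_le_of_le_sSup hne hdir hle
    exact hT.2.2.of_le h𝒞 hShopf hST
  · intro B hB hBpro b hb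
    obtain ⟨S, hSB, hS, hShopf, hbS⟩ := exists_fg_isHopfSubalgebra_mem hB hb
    exact le_sSup (show S ∈ 𝒮 from ⟨hS, hShopf, hBpro S hSB hS hShopf⟩) hbS
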